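/- arXiv:2312.17572 — 2 statements merged into one kernel-verified Lean document; each statement's English description precedes it below -/
import Mathlib

section
/- Let ω^0,…,ω^N and ω̃^0,…,ω̃^N be weights in [ω_*, ω^*] with 0 < ω_* ≤ ω^*, set ε = ω_*/ω^*, and let C ⊆ {i ∈ {0,…,N} : ω^i = ω̃^i}. If (I, Ĩ) is a maximal coupling of the two corresponding categorical distributions (so P(I = Ĩ = i) = min(w^i, w̃^i) with normalised probabilities w^i, w̃^i), then P(I = Ĩ ∈ C) ≥ |C|ε/(|C|ε + (N+1) − |C|). -/
/-!
On a set `C` where the two weight vectors agree, the coupled mass is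
`∑_{i ∈ C} min(ω^i/S, ω^i/S̃) = A / max(S, S̃)` with `A = ∑_{i ∈ C} ω^i`,
and both totals `S, S̃` are at most `A + b` with `b = (N + 1 - |C|) ω^*`. Hence the mass
is at least `A / (A + b)`, which is increasing in `A`, and `A ≥ |C| ω_*`.
-/

open MeasureTheory Finset

theorem min_div_div_left_of_nonneg {a b c : ℝ} (ha : 0 ≤ a) (hb : 0 < b) (hc : 0 < c) :
    min (a / b) (a / c) = a / max b c := by
  rcases le_total b c with h | h
  · rw [max_eq_right h, min_eq_right (div_le_div_of_nonneg_left ha hb h)]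
  · rw [max_eq_left h, min_eq_left (div_le_div_of_nonneg_left ha hc h)]

theorem div_add_le_div_add {x y b : ℝ} (hb : 0 ≤ b) (hxb : 0 < x + b) (hxy : x ≤ y) :
    x / (x + b) ≤ y / (y + b) := by
  rw [div_le_div_iff₀ hxb (by linarith)]
  nlinarith

theorem measure_eq_and_mem_eq_sum {Ω α : Type*} [MeasurableSpace Ω] [MeasurableSpace α]
    [MeasurableSingletonClass α] (P : Measure Ω) {I J : Ω → α} (hI : Measurable I)
    (hJ : Measurable J) (C : Finset α) :
    P {x | I x = J x ∧ I x ∈ C} = ∑ i ∈ C, P {x | I x = i ∧ J x = i} := by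
  have hunion : {x | I x = J x ∧ I x ∈ C} = ⋃ i ∈ C, {x | I x = i ∧ J x = i} := by
    ext x
    simp only [Set.mem_ofPred_eq, Set.mem_iUnion, exists_prop]
    exact ⟨fun ⟨h, hC⟩ => ⟨I x, hC, rfl, h.symm⟩,
      fun ⟨i, hi, hIi, hJi⟩ => ⟨hIi.trans hJi.symm, hIi ▸ hi⟩⟩
  rw [hunion, measure_biUnion_finset]
  · intro i _ j _ hij
    exact Set.disjoint_left.2 fun x hi hj => hij (hi.1.symm.trans hj.1)
  · exact fun i _ => (hI (measurableSet_singleton i)).inter (hJ (measurableSet_singleton i))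

section Weights

variable {ι : Type*} [Fintype ι]

theorem sum_le_sum_add_card_compl_mul [DecidableEq ι] {v : ι → ℝ} {ωS : ℝ}
    (hv : ∀ i, v i ≤ ωS) (C : Finset ι) :
    ∑ i, v i ≤ ∑ i ∈ C, v i + (Fintype.card ι - C.card) * ωS := by
  rw [← sum_add_sum_compl C v]
  gcongr
  calc ∑ i ∈ Cᶜ, v i ≤ ∑ _i ∈ Cᶜ, ωS := sum_le_sum fun i _ => hv i
    _ = (Fintype.card ι - C.card) * ωS := by
      rw [sum_const, nsmul_eq_mul, card_compl, Nat.cast_sub (card_le_univ C)]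

theorem sum_min_div_sum_eq_div_max [Nonempty ι] {w wt : ι → ℝ} (hw : ∀ i, 0 < w i)
    (hwt : ∀ i, 0 < wt i) {C : Finset ι} (hC : ∀ i ∈ C, w i = wt i) :
    ∑ i ∈ C, min (w i / ∑ j, w j) (wt i / ∑ j, wt j)
      = (∑ i ∈ C, w i) / max (∑ j, w j) (∑ j, wt j) := by
  rw [sum_div]
  refine sum_congr rfl fun i hi => ?_
  rw [← hC i hi]
  exact min_div_div_left_of_nonneg (hw i).le (sum_pos (fun j _ => hw j) univ_nonempty)
    (sum_pos (fun j _ => hwt j) univ_nonempty)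

theorem card_mul_div_le_sum_min_div_sum [Nonempty ι] {w wt : ι → ℝ} {ωs ωS : ℝ}
    (h0 : 0 < ωs) (hw : ∀ i, w i ∈ Set.Icc ωs ωS) (hwt : ∀ i, wt i ∈ Set.Icc ωs ωS)
    {C : Finset ι} (hC : ∀ i ∈ C, w i = wt i) :
    C.card * ωs / (C.card * ωs + (Fintype.card ι - C.card) * ωS)
      ≤ ∑ i ∈ C, min (w i / ∑ j, w j) (wt i / ∑ j, wt j) := by
  classical
  have hwpos i : 0 < w i := h0.trans_le (hw i).1
  have hwtpos i : 0 < wt i := h0.trans_le (hwt i).1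
  have hωS : ωs ≤ ωS := (hw (Classical.arbitrary ι)).1.trans (hw _).2
  have hcard : (C.card : ℝ) ≤ Fintype.card ι := by exact_mod_cast card_le_univ C
  have hcard_pos : (0 : ℝ) < Fintype.card ι := by exact_mod_cast Fintype.card_pos
  set A := ∑ i ∈ C, w i
  set b := (Fintype.card ι - C.card : ℝ) * ωS
  have hb : 0 ≤ b := mul_nonneg (sub_nonneg.2 hcard) (h0.le.trans hωS)
  have hA : C.card * ωs ≤ A := by
    simpa using card_nsmul_le_sum C w ωs fun i _ => (hw i).1
  have hden : 0 < C.card * ωs + b := by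
    have : (Fintype.card ι - C.card : ℝ) * ωs ≤ b :=
      mul_le_mul_of_nonneg_left hωS (sub_nonneg.2 hcard)
    nlinarith
  have hmax : max (∑ j, w j) (∑ j, wt j) ≤ A + b := by
    refine max_le (sum_le_sum_add_card_compl_mul (fun i => (hw i).2) C) ?_
    have hA' : ∑ i ∈ C, wt i = A := sum_congr rfl fun i hi => (hC i hi).symm
    simpa [hA'] using sum_le_sum_add_card_compl_mul (fun i => (hwt i).2) C
  rw [sum_min_div_sum_eq_div_max hwpos hwtpos hC]
  calc C.card * ωs / (C.card * ωs + b) ≤ A / (A + b) := div_add_le_div_add hb hden hA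
    _ ≤ A / max (∑ j, w j) (∑ j, wt j) := by
      gcongr
      · exact (mul_nonneg (Nat.cast_nonneg _) h0.le).trans hA
      · exact lt_max_of_lt_left (sum_pos (fun j _ => hwpos j) univ_nonempty)

end Weights

theorem maximal_coupling_coupled_set_lower_general {Ω : Type*} [MeasurableSpace Ω]
    (P : Measure Ω) [IsProbabilityMeasure P] (N : ℕ)
    (w wt : Fin (N + 1) → ℝ) (ωs ωS : ℝ) (h0 : 0 < ωs)
    (hw : ∀ i, w i ∈ Set.Icc ωs ωS) (hwt : ∀ i, wt i ∈ Set.Icc ωs ωS)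
    (C : Finset (Fin (N + 1))) (hC : ∀ i ∈ C, w i = wt i)
    (I It : Ω → Fin (N + 1)) (hI : Measurable I) (hIt : Measurable It)
    (hmax : ∀ i, P {x | I x = i ∧ It x = i}
      = ENNReal.ofReal (min (w i / ∑ j, w j) (wt i / ∑ j, wt j))) :
    ENNReal.ofReal ((C.card * (ωs / ωS))
        / (C.card * (ωs / ωS) + ((N : ℝ) + 1) - C.card))
      ≤ P {x | I x = It x ∧ I x ∈ C} := by
  have hωS : ωS ≠ 0 := (h0.trans_le ((hw 0).1.trans (hw 0).2)).ne'
  have hbound := card_mul_div_le_sum_min_div_sum h0 hw hwt hC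
  rw [Fintype.card_fin, Nat.cast_add_one] at hbound
  rw [measure_eq_and_mem_eq_sum P hI hIt C]
  simp_rw [hmax]
  refine (ENNReal.ofReal_le_ofReal ?_).trans
    (le_sum_of_subadditive ENNReal.ofReal ENNReal.ofReal_zero.le
      (fun _ _ => ENNReal.ofReal_add_le) _ _)
  convert hbound using 1
  field_simp
  ring

/-- For a maximal coupling `(I, Ĩ)` of two categorical distributions with weights in
`[ω_*, ω^*]`, and `C` a set of indices where the weights agree,
`P(I = Ĩ ∈ C) ≥ |C|ε/(|C|ε + (N+1) − |C|)` with `ε = ω_*/ω^*`. -/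
theorem maximal_coupling_coupled_set_lower {Ω : Type*} [MeasurableSpace Ω]
    (P : Measure Ω) [IsProbabilityMeasure P] (N : ℕ)
    (w wt : Fin (N + 1) → ℝ) (ωs ωS : ℝ) (h0 : 0 < ωs) (hle : ωs ≤ ωS)
    (hw : ∀ i, w i ∈ Set.Icc ωs ωS) (hwt : ∀ i, wt i ∈ Set.Icc ωs ωS)
    (C : Finset (Fin (N + 1))) (hC : ∀ i ∈ C, w i = wt i)
    (I It : Ω → Fin (N + 1)) (hI : Measurable I) (hIt : Measurable It)
    (hmax : ∀ i, P {x | I x = i ∧ It x = i}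
      = ENNReal.ofReal (min (w i / ∑ j, w j) (wt i / ∑ j, wt j))) :
    ENNReal.ofReal ((C.card * (ωs / ωS))
        / (C.card * (ωs / ωS) + ((N : ℝ) + 1) - C.card))
      ≤ P {x | I x = It x ∧ I x ∈ C} :=
  maximal_coupling_coupled_set_lower_general P N w wt ωs ωS h0 hw hwt C hC I It hI hIt hmax
end

section
/- Let (A_k)_{k≥1} and (U_k)_{k≥1} be events adapted to a filtration (F_k) with A_k, U_k ∈ F_k, and suppose there are constants p ∈ (0,1] and q ∈ [0,1] such that almost surely: (a) on A_k, P(U_k | F_{k+1}) ≤ 1 − p (where F denotes the backward filtration, i.e. conditioning on the future σ-algebra F_{k+1} ⊇ σ(U_{k+1}, A_{k+1},…)), and (b) on A_k ∩ U_{k+1}^c, P(U_k | F_{k+1}) ≤ q. Then for any t ≥ 1 and horizon m ≥ t, P(U_t ∩ A_t ∩ ⋯ ∩ A_m) ≤ (1−p)^{m−t+1} + q/p. -/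
/-!
Write `a j = P(U_j ∩ A_j ∩ ⋯ ∩ A_m)`. Splitting according to whether `U_{j+1}` occurs,
condition (a) applied to the `𝒢 (j+1)`-event `U_{j+1} ∩ A_{j+1} ∩ ⋯ ∩ A_m` and
condition (b) give `a j ≤ (1 - p) a (j+1) + q`, while `a (m+1) ≤ 1`. The map
`x ↦ (1 - p) x + q` carries the bound `x ≤ (1 - p)^n + q/p` exactly to the next one,
so unrolling the recursion proves it.
-/

open MeasureTheory

section CondExpBound

variable {Ω : Type*} {m m0 : MeasurableSpace Ω} {μ : Measure Ω} [IsFiniteMeasure μ]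
  {s C : Set Ω} {c : ℝ}

lemma measureReal_inter_le_of_condExp_indicator_le (hm : m ≤ m0) (hs : MeasurableSet s)
    (hC : MeasurableSet[m] C)
    (hcond : ∀ᵐ x ∂μ, x ∈ C → μ[s.indicator (fun _ => (1 : ℝ)) | m] x ≤ c) :
    μ.real (s ∩ C) ≤ c * μ.real C := by
  have hint : Integrable (s.indicator (fun _ => (1 : ℝ))) μ :=
    (integrable_const 1).indicator hs
  calc μ.real (s ∩ C) = ∫ x in C, s.indicator (fun _ => (1 : ℝ)) x ∂μ := by
        rw [setIntegral_indicator hs, setIntegral_const, smul_eq_mul, mul_one, Set.inter_comm]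
    _ = ∫ x in C, μ[s.indicator (fun _ => (1 : ℝ)) | m] x ∂μ :=
        (setIntegral_condExp hm hint hC).symm
    _ ≤ ∫ _ in C, c ∂μ :=
        setIntegral_mono_on_ae integrable_condExp.integrableOn (integrable_const c).integrableOn
          (hm _ hC) hcond
    _ = c * μ.real C := by rw [setIntegral_const, smul_eq_mul, mul_comm]

lemma measureReal_inter_inter_le_of_condExp_indicator_le (hm : m ≤ m0)
    (hs : MeasurableSet s) (hC : MeasurableSet[m] C) (hc : 0 ≤ c) {D : Set Ω}
    (hcond : ∀ᵐ x ∂μ, x ∈ D → μ[s.indicator (fun _ => (1 : ℝ)) | m] x ≤ c) :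
    μ.real (s ∩ D ∩ C) ≤ c * μ.real C := by
  set f := μ[s.indicator (fun _ => (1 : ℝ)) | m]
  set S : Set Ω := f ⁻¹' Set.Iic c ∩ C
  have hS : MeasurableSet[m] S :=
    (stronglyMeasurable_condExp.measurable measurableSet_Iic).inter hC
  have hsub : (s ∩ D ∩ C : Set Ω) ≤ᵐ[μ] (s ∩ S : Set Ω) := by
    filter_upwards [hcond] with x hx
    rintro ⟨⟨hxs, hxD⟩, hxC⟩
    exact ⟨hxs, hx hxD, hxC⟩
  calc μ.real (s ∩ D ∩ C) ≤ μ.real (s ∩ S) :=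
        ENNReal.toReal_mono (measure_ne_top μ _) (measure_mono_ae hsub)
    _ ≤ c * μ.real S :=
        measureReal_inter_le_of_condExp_indicator_le hm hs hS (ae_of_all _ fun _ hx => hx.1)
    _ ≤ c * μ.real C := mul_le_mul_of_nonneg_left (measureReal_mono Set.inter_subset_right) hc

end CondExpBound

lemma le_pow_add_div_of_le_mul_add {a : ℕ → ℝ} {p q : ℝ} (hp : 0 < p) (hp1 : p ≤ 1)
    (hq : 0 ≤ q) {N : ℕ} (hstep : ∀ j < N, a j ≤ (1 - p) * a (j + 1) + q) (hN : a N ≤ 1) :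
    ∀ n ≤ N, a (N - n) ≤ (1 - p) ^ n + q / p := by
  intro n
  induction n with
  | zero => simpa using hN.trans (le_add_of_nonneg_right (div_nonneg hq hp.le))
  | succ n ih =>
    intro hn
    have hidx : N - (n + 1) + 1 = N - n := by omega
    have hr : 0 ≤ 1 - p := by linarith
    calc a (N - (n + 1)) ≤ (1 - p) * a (N - n) + q := hidx ▸ hstep _ (by omega)
      _ ≤ (1 - p) * ((1 - p) ^ n + q / p) + q := by gcongr; exact ih (by omega)
      _ = (1 - p) ^ (n + 1) + q / p := by field_simp; ring

lemma measureReal_inter_biInter_le_mul_add {Ω : Type*} [m0 : MeasurableSpace Ω]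
    {P : Measure Ω} [IsProbabilityMeasure P] {𝒢 : ℕ → MeasurableSpace Ω}
    (hle : ∀ k, 𝒢 k ≤ m0) (hanti : Antitone 𝒢) {A U : ℕ → Set Ω}
    (hA : ∀ k, MeasurableSet[𝒢 k] (A k)) (hU : ∀ k, MeasurableSet[𝒢 k] (U k))
    {p q : ℝ} (hp : p ≤ 1) (hq : 0 ≤ q) {j m : ℕ} (hjm : j ≤ m)
    (ha : ∀ᵐ x ∂P, x ∈ A j →
      (P[(U j).indicator (fun _ => (1 : ℝ)) | 𝒢 (j + 1)]) x ≤ 1 - p)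
    (hb : ∀ᵐ x ∂P, x ∈ A j ∩ (U (j + 1))ᶜ →
      (P[(U j).indicator (fun _ => (1 : ℝ)) | 𝒢 (j + 1)]) x ≤ q) :
    P.real (U j ∩ ⋂ k ∈ Finset.Icc j m, A k)
      ≤ (1 - p) * P.real (U (j + 1) ∩ ⋂ k ∈ Finset.Icc (j + 1) m, A k) + q := by
  rw [← Finset.insert_Icc_add_one_left_eq_Icc hjm, Finset.set_biInter_insert]
  set C := ⋂ k ∈ Finset.Icc (j + 1) m, A k
  have hC : MeasurableSet[𝒢 (j + 1)] (U (j + 1) ∩ C) :=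
    (hU _).inter <| Finset.measurableSet_biInter _ fun k hk =>
      hanti (Finset.mem_Icc.mp hk).1 _ (hA k)
  have hsplit : U j ∩ (A j ∩ C) ⊆
      U j ∩ A j ∩ (U (j + 1) ∩ C) ∪ U j ∩ (A j ∩ (U (j + 1))ᶜ) ∩ Set.univ := by
    rintro x ⟨hxU, hxA, hxC⟩
    by_cases hx : x ∈ U (j + 1)
    · exact Or.inl ⟨⟨hxU, hxA⟩, hx, hxC⟩
    · exact Or.inr ⟨⟨hxU, hxA, hx⟩, trivial⟩
  have hUj : MeasurableSet (U j) := hle j _ (hU j)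
  have hcoupled := measureReal_inter_inter_le_of_condExp_indicator_le (hle _) hUj hC
    (by linarith) ha
  have hdecoupled := measureReal_inter_inter_le_of_condExp_indicator_le (hle _) hUj
    MeasurableSet.univ hq hb
  calc P.real (U j ∩ (A j ∩ C))
      ≤ P.real (U j ∩ A j ∩ (U (j + 1) ∩ C))
        + P.real (U j ∩ (A j ∩ (U (j + 1))ᶜ) ∩ Set.univ) :=
        (measureReal_mono hsplit).trans (measureReal_union_le _ _)
    _ ≤ (1 - p) * P.real (U (j + 1) ∩ C) + q * P.real Set.univ :=
        add_le_add hcoupled hdecoupled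
    _ = (1 - p) * P.real (U (j + 1) ∩ C) + q := by rw [probReal_univ, mul_one]

/-- Abstract backward-sampling coupling bound: with a backward (decreasing) filtration
`𝒢`, events `A_k, U_k ∈ 𝒢 k`, if on `A_k` we have `P(U_k | 𝒢_{k+1}) ≤ 1 − p` and on
`A_k ∩ U_{k+1}ᶜ` we have `P(U_k | 𝒢_{k+1}) ≤ q`, then
`P(U_t ∩ A_t ∩ ⋯ ∩ A_m) ≤ (1−p)^{m−t+1} + q/p`. -/
theorem backward_coupling_bound {Ω : Type*} [m0 : MeasurableSpace Ω]
    (P : Measure Ω) [IsProbabilityMeasure P]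
    (𝒢 : ℕ → MeasurableSpace Ω) (hle : ∀ k, 𝒢 k ≤ m0)
    (hanti : ∀ k, 𝒢 (k + 1) ≤ 𝒢 k)
    (A U : ℕ → Set Ω)
    (hA : ∀ k, MeasurableSet[𝒢 k] (A k)) (hU : ∀ k, MeasurableSet[𝒢 k] (U k))
    (p q : ℝ) (hp : p ∈ Set.Ioc (0 : ℝ) 1) (hq : q ∈ Set.Icc (0 : ℝ) 1)
    (ha : ∀ k : ℕ, ∀ᵐ x ∂P, x ∈ A k →
      (P[(U k).indicator (fun _ => (1 : ℝ)) | 𝒢 (k + 1)]) x ≤ 1 - p)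
    (hb : ∀ k : ℕ, ∀ᵐ x ∂P, x ∈ A k ∩ (U (k + 1))ᶜ →
      (P[(U k).indicator (fun _ => (1 : ℝ)) | 𝒢 (k + 1)]) x ≤ q) :
    ∀ t m : ℕ, 1 ≤ t → t ≤ m →
      P (U t ∩ ⋂ k ∈ Finset.Icc t m, A k)
        ≤ ENNReal.ofReal ((1 - p) ^ (m - t + 1) + q / p) := by
  intro t m _ htm
  obtain ⟨hp0, hp1⟩ := hp
  set a : ℕ → ℝ := fun j ↦ P.real (U j ∩ ⋂ k ∈ Finset.Icc j m, A k)
  have hrec := le_pow_add_div_of_le_mul_add (a := a) (N := m + 1) hp0 hp1 hq.1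
    (fun j hj ↦ measureReal_inter_biInter_le_mul_add hle (antitone_nat_of_succ_le hanti) hA hU
      hp1 hq.1 (by omega) (ha j) (hb j))
    measureReal_le_one (m - t + 1) (by omega)
  rw [show m + 1 - (m - t + 1) = t by omega] at hrec
  rw [← ofReal_measureReal]
  exact ENNReal.ofReal_le_ofReal hrec
end
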